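/- arXiv:1503.02432 — 5 statements merged into one kernel-verified Lean document; each statement's English description precedes it below -/
import Mathlib

section
/- Let n > 2 be an integer and m = (n-2)/2. Let g : [0,∞) × ℝ → ℝ be C¹ with g(0,s) = 0 for all s, and set G(y₁, s) = ∫₀^{y₁} g(a, s) da. If (y₁, y₂) : I → (0,∞) × ℝ is a C¹ solution on an interval I of the system ẏ₁ = m·y₁ + y₂, ẏ₂ = -m·y₂ - g(y₁, s), then for every s ∈ I the function s ↦ m·y₁(s)·y₂(s) + y₂(s)²/2 + G(y₁(s), s) is differentiable and its derivative equals (∂G/∂s)(y₁(s), s) = ∫₀^{y₁(s)} (∂g/∂s)(a, s) da. (This is the Pohozaev-type identity: H is non-decreasing, respectively non-increasing, along trajectories whenever G(y₁, ·) is non-decreasing, respectively non-increasing, in s.) -/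
open Real Filter Set MeasureTheory

noncomputable section

namespace Paper

def mExp (l : ℝ) : ℝ := 2 / (l - 2)

def twoStar (n : ℕ) : ℝ := 2 * (n : ℝ) / ((n : ℝ) - 2)

def twoLow (n : ℕ) : ℝ := 2 * ((n : ℝ) - 1) / ((n : ℝ) - 2)

def Aexp (n : ℕ) (l : ℝ) : ℝ := (n : ℝ) - 2 - 2 * mExp l

def Cexp (n : ℕ) (l : ℝ) : ℝ := mExp l * ((n : ℝ) - 2 - mExp l)

/-- The Fowler transform `g(y₁, s; l)` of the nonlinearity `f`. -/
def fowlerG (f : ℝ → ℝ → ℝ) (l y s : ℝ) : ℝ :=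
  f (y * Real.exp (-(mExp l) * s)) (Real.exp s) * Real.exp ((mExp l + 2) * s)

/-- `G(y₁, s; l) = ∫₀^{y₁} g(a, s; l) da`. -/
def Gprim (f : ℝ → ℝ → ℝ) (l y s : ℝ) : ℝ := ∫ a in (0:ℝ)..y, fowlerG f l a s

/-- `U` (with derivative `U'`) solves `U'' + ((n-1)/r) U' + f(U, r) = 0` on `S`. -/
def SolOn (n : ℕ) (f : ℝ → ℝ → ℝ) (U U' : ℝ → ℝ) (S : Set ℝ) : Prop :=
  ∀ r ∈ S, HasDerivAt U (U' r) r ∧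
    HasDerivAt U' (-(((n : ℝ) - 1) / r * U' r + f (U r) r)) r

/-- `U` is a regular solution with `U(0) = α` (C¹ up to the origin, `U'(0)=0`). -/
def RegularSol (n : ℕ) (f : ℝ → ℝ → ℝ) (U U' : ℝ → ℝ) (α : ℝ) : Prop :=
  SolOn n f U U' (Set.Ioi 0) ∧ ContinuousOn U (Set.Ici 0) ∧
    ContinuousOn U' (Set.Ici 0) ∧ U 0 = α ∧ U' 0 = 0

def SingularAtZero (U : ℝ → ℝ) : Prop :=
  Tendsto U (nhdsWithin 0 (Set.Ioi 0)) atTop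

def FastDecayTo (n : ℕ) (U : ℝ → ℝ) (β : ℝ) : Prop :=
  Tendsto (fun r => r ^ ((n : ℝ) - 2) * U r) atTop (nhds β)

def SlowDecay (n : ℕ) (U : ℝ → ℝ) : Prop :=
  Tendsto (fun r => r ^ ((n : ℝ) - 2) * U r) atTop atTop

/-- Condition (F0). -/
def CondF0 (f : ℝ → ℝ → ℝ) : Prop :=
  (∀ p : ℝ × ℝ, 0 ≤ p.1 → 0 < p.2 → ∃ K ε : ℝ, 0 < ε ∧
      ∀ a b : ℝ × ℝ, 0 ≤ a.1 → 0 < a.2 → 0 ≤ b.1 → 0 < b.2 →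
        dist a p < ε → dist b p < ε → |f a.1 a.2 - f b.1 b.2| ≤ K * dist a b) ∧
    (∀ r : ℝ, 0 < r → f 0 r = 0) ∧
    (∀ u r : ℝ, 0 < u → 0 < r → 0 < f u r) ∧
    (∀ r : ℝ, 0 < r → MonotoneOn (fun u => f u r) (Set.Ici 0)) ∧
    (∀ u : ℝ, 0 < u → ∃ C : ℝ, ∀ r : ℝ, 0 < r → r ≤ 1 → f u r * r ^ 2 ≤ C)

/-- Condition (G0) for an autonomous nonlinearity `h`. -/
def CondG0 (h : ℝ → ℝ) : Prop :=
  (∃ h' : ℝ → ℝ, (∀ y : ℝ, 0 < y → HasDerivAt h (h' y) y) ∧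
      ContinuousOn h' (Set.Ioi 0) ∧ StrictMonoOn h' (Set.Ioi 0)) ∧
    Tendsto (fun y => h y / y) (nhdsWithin 0 (Set.Ioi 0)) (nhds 0) ∧
    Tendsto (fun y => h y / y) atTop atTop

/-- `h` is locally Lipschitz on `(0, ∞)`. -/
def LocLip (h : ℝ → ℝ) : Prop :=
  ∀ y : ℝ, 0 < y → ∃ K ε : ℝ, 0 < ε ∧ ∀ a b : ℝ, |a - y| < ε → |b - y| < ε →
    |h a - h b| ≤ K * |a - b|

/-- Condition (Gu), with the autonomous limit `gneg = g^{-∞}` given explicitly. -/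
def CondGuWith (n : ℕ) (f : ℝ → ℝ → ℝ) (lu : ℝ) (gneg : ℝ → ℝ) : Prop :=
  twoLow n < lu ∧
    (∀ K : Set ℝ, IsCompact K → K ⊆ Set.Ioi 0 →
      TendstoUniformlyOn (fun s y => fowlerG f lu y s) gneg atBot K) ∧
    LocLip gneg ∧ (∃ y : ℝ, 0 < y ∧ gneg y ≠ 0) ∧ CondG0 gneg ∧
    (∃ ϖ : ℝ, 0 < ϖ ∧ ∀ y : ℝ, 0 < y →
      Tendsto (fun s => Real.exp (-ϖ * s) * deriv (fun t => fowlerG f lu y t) s)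
        atBot (nhds 0)) ∧
    (lu = twoStar n → ∃ M : ℝ, 0 < M ∧ ∀ y : ℝ, 0 < y →
      MonotoneOn (fun s => fowlerG f lu y s) (Set.Iio (-M)) ∨
        AntitoneOn (fun s => fowlerG f lu y s) (Set.Iio (-M)))

/-- Condition (Gu). -/
def CondGu (n : ℕ) (f : ℝ → ℝ → ℝ) (lu : ℝ) : Prop :=
  ∃ gneg : ℝ → ℝ, CondGuWith n f lu gneg

/-- Condition (Gs), with the autonomous limit `gplus = g^{+∞}` given explicitly. -/
def CondGsWith (n : ℕ) (f : ℝ → ℝ → ℝ) (ls : ℝ) (gplus : ℝ → ℝ) : Prop :=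
  twoLow n < ls ∧
    (∀ K : Set ℝ, IsCompact K → K ⊆ Set.Ioi 0 →
      TendstoUniformlyOn (fun s y => fowlerG f ls y s) gplus atTop K) ∧
    LocLip gplus ∧ (∃ y : ℝ, 0 < y ∧ gplus y ≠ 0) ∧ CondG0 gplus ∧
    (∃ ϖ : ℝ, 0 < ϖ ∧ ∀ y : ℝ, 0 < y →
      Tendsto (fun s => Real.exp (ϖ * s) * deriv (fun t => fowlerG f ls y t) s)
        atTop (nhds 0)) ∧
    (ls = twoStar n → ∃ M : ℝ, 0 < M ∧ ∀ y : ℝ, 0 < y →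
      MonotoneOn (fun s => fowlerG f ls y s) (Set.Ioi M) ∨
        AntitoneOn (fun s => fowlerG f ls y s) (Set.Ioi M))

/-- Condition (Gs). -/
def CondGs (n : ℕ) (f : ℝ → ℝ → ℝ) (ls : ℝ) : Prop :=
  ∃ gplus : ℝ → ℝ, CondGsWith n f ls gplus

/-- Condition (A⁺): `G(y₁, ·; 2^*)` is non-decreasing, strictly somewhere. -/
def CondAplus (n : ℕ) (f : ℝ → ℝ → ℝ) : Prop :=
  (∀ y : ℝ, 0 < y → Monotone (fun s => Gprim f (twoStar n) y s)) ∧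
    ∃ y : ℝ, 0 < y ∧ ∃ s₁ s₂ : ℝ, s₁ < s₂ ∧
      Gprim f (twoStar n) y s₁ < Gprim f (twoStar n) y s₂

/-- Condition (A⁻): `G(y₁, ·; 2^*)` is non-increasing, strictly somewhere. -/
def CondAminus (n : ℕ) (f : ℝ → ℝ → ℝ) : Prop :=
  (∀ y : ℝ, 0 < y → Antitone (fun s => Gprim f (twoStar n) y s)) ∧
    ∃ y : ℝ, 0 < y ∧ ∃ s₁ s₂ : ℝ, s₁ < s₂ ∧
      Gprim f (twoStar n) y s₂ < Gprim f (twoStar n) y s₁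

/-- The heat semigroup `e^{tΔ}` applied to `φ`. -/
def heatOp (n : ℕ) (t : ℝ) (φ : EuclideanSpace ℝ (Fin n) → ℝ)
    (x : EuclideanSpace ℝ (Fin n)) : ℝ :=
  (4 * Real.pi * t) ^ (-(n : ℝ) / 2) * ∫ y, Real.exp (-‖x - y‖ ^ 2 / (4 * t)) * φ y

/-- A global `C_B`-mild solution of `∂ₜ u = Δu + f(u, |x|)`, `u(·,0) = φ`. -/
def CBMildGlobal (n : ℕ) (f : ℝ → ℝ → ℝ) (φ : EuclideanSpace ℝ (Fin n) → ℝ)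
    (u : ℝ → EuclideanSpace ℝ (Fin n) → ℝ) : Prop :=
  (∀ x, u 0 x = φ x) ∧
    (∀ T : ℝ, 0 < T →
      ContinuousOn (fun p : EuclideanSpace ℝ (Fin n) × ℝ => u p.2 p.1)
        (Set.univ ×ˢ Set.Icc 0 T) ∧
      ∃ M : ℝ, ∀ t ∈ Set.Icc (0:ℝ) T, ∀ x, |u t x| ≤ M) ∧
    ∀ t : ℝ, 0 < t → ∀ x, u t x =
      heatOp n t φ x + ∫ s in (0:ℝ)..t, heatOp n (t - s) (fun y => f (u s y) ‖y‖) x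

/-- The weight `w(x)`. -/
def weightW (n : ℕ) (ν a : ℝ) (x : EuclideanSpace ℝ (Fin n)) : ℝ :=
  if ‖x‖ ≤ 1 then ‖x‖ ^ ν else ‖x‖ ^ a

/-- The weighted `L^∞` norm `‖φ‖_X = ‖φ · w‖_∞`. -/
def XNorm (n : ℕ) (ν a : ℝ) (φ : EuclideanSpace ℝ (Fin n) → ℝ) : ENNReal :=
  essSup (fun x => ENNReal.ofReal (|φ x| * weightW n ν a x)) volume

/-- The mild (Duhamel) equation on `(ℝⁿ \ {0}) × [0, T]`. -/
def MildEq (n : ℕ) (f : ℝ → ℝ → ℝ) (φ : EuclideanSpace ℝ (Fin n) → ℝ)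
    (u : ℝ → EuclideanSpace ℝ (Fin n) → ℝ) (T : ℝ) : Prop :=
  (∀ x : EuclideanSpace ℝ (Fin n), x ≠ 0 → u 0 x = φ x) ∧
    ∀ t : ℝ, 0 < t → t ≤ T → ∀ x : EuclideanSpace ℝ (Fin n), x ≠ 0 →
      u t x = heatOp n t φ x +
        ∫ s in (0:ℝ)..t, heatOp n (t - s) (fun y => f (u s y) ‖y‖) x

/-- A mild solution on `[0,T]` with weighted norm bounded by `ρ`. -/
def MildSol (n : ℕ) (f : ℝ → ℝ → ℝ) (ν a : ℝ) (φ : EuclideanSpace ℝ (Fin n) → ℝ)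
    (ρ T : ℝ) (u : ℝ → EuclideanSpace ℝ (Fin n) → ℝ) : Prop :=
  MildEq n f φ u T ∧ ∀ t ∈ Set.Icc (0:ℝ) T, XNorm n ν a (u t) ≤ ENNReal.ofReal ρ

end Paper

/-!
Along a trajectory, the derivative of `m y₁ y₂ + y₂²/2` is `-g(y₁, s) ẏ₁` (the `m y₂²` terms
cancel because both coefficients of the system equal `m`), and this cancels the chain-rule term
`g(y₁, s) ẏ₁` of `G(y₁(s), s)`; only the explicit `s`-dependence of `G` survives. That the
chain rule applies to `G` is the Leibniz rule: `(x, t) ↦ ∫₀ˣ F(a, t) da` has continuous partial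
derivatives `F(x, t)` and `∫₀ˣ ∂ₜF(a, t) da`, hence is strictly differentiable.
-/

open intervalIntegral

section Leibniz

variable {E : Type*} [NormedAddCommGroup E] [NormedSpace ℝ E] {F : ℝ → ℝ → E}

theorem ContDiff.hasDerivAt_right (hF : ContDiff ℝ 1 ↿F) (a t : ℝ) :
    HasDerivAt (F a ·) (fderiv ℝ ↿F (a, t) (0, 1)) t :=
  ((hF.differentiable one_ne_zero) (a, t)).hasFDerivAt.comp_hasDerivAt (l := ↿F) (x := t)
    ((hasDerivAt_const t a).prodMk (hasDerivAt_id t))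

theorem ContDiff.continuous_deriv_right (hF : ContDiff ℝ 1 ↿F) :
    Continuous fun p : ℝ × ℝ => deriv (F p.1 ·) p.2 := by
  simp_rw [fun p : ℝ × ℝ => (hF.hasDerivAt_right p.1 p.2).deriv]
  exact (hF.continuous_fderiv one_ne_zero).clm_apply continuous_const

theorem ContDiff.hasDerivAt_intervalIntegral_param (hF : ContDiff ℝ 1 ↿F) (a b t : ℝ) :
    HasDerivAt (fun τ => ∫ x in a..b, F x τ) (∫ x in a..b, deriv (F x ·) t) t := by
  obtain ⟨C, hC⟩ : ∃ C, ∀ p ∈ uIcc a b ×ˢ Metric.closedBall t 1, ‖deriv (F p.1 ·) p.2‖ ≤ C :=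
    (isCompact_uIcc.prod (isCompact_closedBall t 1)).exists_bound_of_continuousOn
      hF.continuous_deriv_right.continuousOn
  have hcont (τ : ℝ) : Continuous (F · τ) :=
    hF.continuous.comp (continuous_id.prodMk continuous_const)
  refine (hasDerivAt_integral_of_dominated_loc_of_deriv_le (bound := fun _ => C)
    (Metric.ball_mem_nhds t one_pos) (.of_forall fun τ => (hcont τ).aestronglyMeasurable)
    ((hcont t).intervalIntegrable _ _)
    (hF.continuous_deriv_right.comp (continuous_id.prodMk continuous_const)).aestronglyMeasurable
    (.of_forall fun x hx τ hτ =>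
      hC (x, τ) ⟨uIoc_subset_uIcc hx, Metric.ball_subset_closedBall hτ⟩)
    intervalIntegrable_const
    (.of_forall fun x _ τ _ => (hF.hasDerivAt_right x τ).differentiableAt.hasDerivAt)).2

variable [CompleteSpace E]

theorem ContDiff.hasStrictFDerivAt_intervalIntegral (hF : ContDiff ℝ 1 ↿F) (a : ℝ)
    (p : ℝ × ℝ) :
    HasStrictFDerivAt (fun q : ℝ × ℝ => ∫ x in a..q.1, F x q.2)
      (((1 : ℝ →L[ℝ] ℝ).smulRight (F p.1 p.2)).coprod
        ((1 : ℝ →L[ℝ] ℝ).smulRight (∫ x in a..p.1, deriv (F x ·) p.2))) p := by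
  have hcont (τ : ℝ) : Continuous (F · τ) :=
    hF.continuous.comp (continuous_id.prodMk continuous_const)
  have hsmulRight : Continuous fun v : E => (1 : ℝ →L[ℝ] ℝ).smulRight v := by fun_prop
  have hpartial : Continuous fun q : ℝ × ℝ => ∫ x in a..q.1, deriv (F x ·) q.2 :=
    continuous_parametric_intervalIntegral_of_continuous
      (f := fun (q : ℝ × ℝ) x => deriv (F x ·) q.2)
      (hF.continuous_deriv_right.comp (continuous_snd.prodMk (continuous_snd.comp continuous_fst)))
      continuous_fst
  exact hasStrictFDerivAt_uncurry_coprod (f := fun b τ => ∫ x in a..b, F x τ)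
    (f₁ := fun b τ => (1 : ℝ →L[ℝ] ℝ).smulRight (F b τ))
    (f₂ := fun b τ => (1 : ℝ →L[ℝ] ℝ).smulRight (∫ x in a..b, deriv (F x ·) τ))
    (.of_forall fun q => ((hcont q.2).integral_hasStrictDerivAt a q.1).hasDerivAt.hasFDerivAt)
    (.of_forall fun q => (hF.hasDerivAt_intervalIntegral_param a q.1 q.2).hasFDerivAt)
    (hsmulRight.comp hF.continuous).continuousAt (hsmulRight.comp hpartial).continuousAt

theorem ContDiff.hasDerivAt_intervalIntegral_comp (hF : ContDiff ℝ 1 ↿F) (a : ℝ)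
    {u : ℝ → ℝ} {u' t : ℝ} (hu : HasDerivAt u u' t) :
    HasDerivAt (fun τ => ∫ x in a..u τ, F x τ)
      (u' • F (u t) t + ∫ x in a..u t, deriv (F x ·) t) t := by
  refine ((hF.hasStrictFDerivAt_intervalIntegral a (u t, t)).hasFDerivAt.comp_hasDerivAt
    (f := fun τ => (u τ, τ)) t (hu.prodMk (hasDerivAt_id t))).congr_deriv ?_
  simp

end Leibniz

theorem pohozaev_identity_along_trajectories_general
    (m : ℝ)
    (g : ℝ → ℝ → ℝ)
    (hg : ContDiff ℝ 1 (fun p : ℝ × ℝ => g p.1 p.2))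
    (I : Set ℝ) (y₁ y₂ : ℝ → ℝ)
    (hsys : ∀ s ∈ I,
      HasDerivAt y₁ (m * y₁ s + y₂ s) s ∧
      HasDerivAt y₂ (-(m * y₂ s) - g (y₁ s) s) s) :
    ∀ s ∈ I,
      HasDerivAt
        (fun t => m * y₁ t * y₂ t + y₂ t ^ 2 / 2 + ∫ a in (0:ℝ)..(y₁ t), g a t)
        (∫ a in (0:ℝ)..(y₁ s), deriv (fun t => g a t) s) s := by
  intro s hs
  obtain ⟨hy₁, hy₂⟩ := hsys s hs
  refine ((((hy₁.const_mul m).mul hy₂).add ((hy₂.pow 2).div_const 2)).add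
    (hg.hasDerivAt_intervalIntegral_comp 0 hy₁)).congr_deriv ?_
  rw [smul_eq_mul]
  ring

/-- the Pohozaev-type identity for the Fowler system at the critical exponent:
along trajectories, `d/ds H(y₁(s), y₂(s), s) = (∂G/∂s)(y₁(s), s)`. -/
theorem pohozaev_identity_along_trajectories
    (n : ℕ) (hn : 2 < n) (m : ℝ) (hm : m = ((n : ℝ) - 2) / 2)
    (g : ℝ → ℝ → ℝ)
    (hg : ContDiff ℝ 1 (fun p : ℝ × ℝ => g p.1 p.2))
    (hg0 : ∀ s : ℝ, g 0 s = 0)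
    (I : Set ℝ) (y₁ y₂ : ℝ → ℝ)
    (hpos : ∀ s ∈ I, 0 < y₁ s)
    (hsys : ∀ s ∈ I,
      HasDerivAt y₁ (m * y₁ s + y₂ s) s ∧
      HasDerivAt y₂ (-(m * y₂ s) - g (y₁ s) s) s) :
    ∀ s ∈ I,
      HasDerivAt
        (fun t => m * y₁ t * y₂ t + y₂ t ^ 2 / 2 + ∫ a in (0:ℝ)..(y₁ t), g a t)
        (∫ a in (0:ℝ)..(y₁ s), deriv (fun t => g a t) s) s :=
  pohozaev_identity_along_trajectories_general m g hg I y₁ y₂ hsys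
end
end

section
/- Let B > 0, ε ∈ (0, B) and S ∈ ℝ. Let h : [S,∞) → ℝ be C² and N : [S,∞) → ℝ continuous, with h''(s) + B·h(s) + N(s) = 0 for all s ≥ S, |N(s)| ≤ ε·|h(s)| for all s ≥ S, and (h(s), h'(s)) ≠ (0,0) for all s ≥ S. Then h changes sign infinitely often as s → +∞: for every T ≥ S there exist s₁, s₂ > T with h(s₁) > 0 and h(s₂) < 0. -/
open Real Filter Set MeasureTheory

noncomputable section

/-! If `h ≥ 0` on a half-line `[a, ∞)`, then `h'' = -(B h + N) ≤ -(B - ε) h ≤ 0`, so `h'` is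
antitone; a nonnegative function cannot have derivative eventually below a negative constant, so
`h' ≥ 0` and `h` is nondecreasing. If `h(s₀) > 0` then `h'' ≤ -(B - ε) h(s₀) < 0` on `[s₀, ∞)`,
which is impossible for the nonnegative `h'`. Hence `h` vanishes on `[a, ∞)`, and so does `h'`,
contradicting `(h, h') ≠ (0, 0)`. Applying this to `h` and `-h` gives both signs. -/

section HalfLine

variable {f f' f'' : ℝ → ℝ} {a : ℝ}

theorem monotoneOn_Ici_of_hasDerivAt_nonneg (hf : ∀ x ∈ Ici a, HasDerivAt f (f' x) x)
    (hf' : ∀ x ∈ Ici a, 0 ≤ f' x) : MonotoneOn f (Ici a) :=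
  monotoneOn_of_hasDerivWithinAt_nonneg (convex_Ici a)
    (fun x hx => (hf x hx).continuousAt.continuousWithinAt)
    (fun x hx => (hf x (interior_subset hx)).hasDerivWithinAt)
    (fun x hx => hf' x (interior_subset hx))

theorem antitoneOn_Ici_of_hasDerivAt_nonpos (hf : ∀ x ∈ Ici a, HasDerivAt f (f' x) x)
    (hf' : ∀ x ∈ Ici a, f' x ≤ 0) : AntitoneOn f (Ici a) :=
  antitoneOn_of_hasDerivWithinAt_nonpos (convex_Ici a)
    (fun x hx => (hf x hx).continuousAt.continuousWithinAt)
    (fun x hx => (hf x (interior_subset hx)).hasDerivWithinAt)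
    (fun x hx => hf' x (interior_subset hx))

theorem nonneg_of_nonneg_of_hasDerivAt_le {C : ℝ} (hf : ∀ x ∈ Ici a, HasDerivAt f (f' x) x)
    (hC : ∀ x ∈ Ici a, f' x ≤ C) (hf0 : ∀ x ∈ Ici a, 0 ≤ f x) : 0 ≤ C := by
  by_contra! hC0
  have hslope : AntitoneOn (fun x => f x - C * x) (Ici a) :=
    antitoneOn_Ici_of_hasDerivAt_nonpos
      (fun x hx => (hf x hx).sub ((hasDerivAt_id x).const_mul C |>.congr_deriv (mul_one C)))
      (fun x hx => sub_nonpos.mpr (hC x hx))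
  have hCt : -C * (f a / -C) = f a := mul_div_cancel₀ _ (by linarith)
  have hay : a ≤ a + f a / -C + 1 := by
    linarith [div_nonneg (hf0 a self_mem_Ici) (by linarith : 0 ≤ -C)]
  linarith [hslope self_mem_Ici hay hay, hf0 _ hay]

theorem nonneg_deriv_of_nonneg_of_antitoneOn (hf : ∀ x ∈ Ici a, HasDerivAt f (f' x) x)
    (hf' : AntitoneOn f' (Ici a)) (hf0 : ∀ x ∈ Ici a, 0 ≤ f x) : ∀ x ∈ Ici a, 0 ≤ f' x :=
  fun x hx =>
    have hsub : Ici x ⊆ Ici a := Ici_subset_Ici.2 hx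
    nonneg_of_nonneg_of_hasDerivAt_le (fun y hy => hf y (hsub hy))
      (fun _ hy => hf' hx (hsub hy) hy) (fun y hy => hf0 y (hsub hy))

theorem eqOn_zero_of_nonneg_of_deriv2_le_neg_mul {c : ℝ} (hc : 0 < c)
    (hf : ∀ x ∈ Ici a, HasDerivAt f (f' x) x) (hf' : ∀ x ∈ Ici a, HasDerivAt f' (f'' x) x)
    (hf'' : ∀ x ∈ Ici a, f'' x ≤ -(c * f x)) (hf0 : ∀ x ∈ Ici a, 0 ≤ f x) :
    EqOn f 0 (Ici a) := by
  have hf'_anti : AntitoneOn f' (Ici a) :=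
    antitoneOn_Ici_of_hasDerivAt_nonpos hf'
      (fun x hx => (hf'' x hx).trans (by nlinarith [hf0 x hx]))
  have hf'0 := nonneg_deriv_of_nonneg_of_antitoneOn hf hf'_anti hf0
  have hf_mono := monotoneOn_Ici_of_hasDerivAt_nonneg hf hf'0
  intro x hx
  have hsub : Ici x ⊆ Ici a := Ici_subset_Ici.2 hx
  have : 0 ≤ -(c * f x) := nonneg_of_nonneg_of_hasDerivAt_le
    (fun y hy => hf' y (hsub hy))
    (fun y hy => (hf'' y (hsub hy)).trans (by nlinarith [hf_mono hx (hsub hy) hy]))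
    (fun y hy => hf'0 y (hsub hy))
  exact le_antisymm (by simpa using nonpos_of_mul_nonpos_right (by linarith) hc) (hf0 x hx)

end HalfLine

theorem exists_neg_after_of_perturbed_oscillator {B ε S : ℝ} (hεB : ε < B)
    {h h' N : ℝ → ℝ}
    (hode1 : ∀ s : ℝ, S ≤ s → HasDerivAt h (h' s) s)
    (hode2 : ∀ s : ℝ, S ≤ s → HasDerivAt h' (-(B * h s + N s)) s)
    (hN : ∀ s : ℝ, S ≤ s → |N s| ≤ ε * |h s|)
    (hnz : ∀ s : ℝ, S ≤ s → ¬(h s = 0 ∧ h' s = 0))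
    {T : ℝ} (hTS : S ≤ T) :
    ∃ s : ℝ, T < s ∧ h s < 0 := by
  by_contra! hnonneg
  have hS : ∀ x ∈ Ici (T + 1), S ≤ x := fun x hx => by linarith [mem_Ici.mp hx]
  have hh0 : ∀ x ∈ Ici (T + 1), 0 ≤ h x := fun x hx => hnonneg x (by linarith [mem_Ici.mp hx])
  have hzero : EqOn h 0 (Ici (T + 1)) :=
    eqOn_zero_of_nonneg_of_deriv2_le_neg_mul (sub_pos.mpr hεB)
      (fun x hx => hode1 x (hS x hx)) (fun x hx => hode2 x (hS x hx))
      (fun x hx => by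
        have := hN x (hS x hx)
        rw [abs_of_nonneg (hh0 x hx)] at this
        nlinarith [neg_abs_le (N x)])
      hh0
  have hzero_nhds : h =ᶠ[nhds (T + 2)] fun _ => 0 := by
    filter_upwards [Ioi_mem_nhds (show T + 1 < T + 2 by linarith)] with x hx
    exact hzero (mem_Ici.mpr (le_of_lt hx))
  have hderiv0 : h' (T + 2) = 0 :=
    (hode1 (T + 2) (by linarith)).unique
      ((hasDerivAt_const (T + 2) (0 : ℝ)).congr_of_eventuallyEq hzero_nhds)
  exact hnz (T + 2) (by linarith) ⟨hzero (mem_Ici.mpr (by linarith)), hderiv0⟩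

theorem perturbed_oscillator_sign_changes_general
    (B ε S : ℝ) (hεB : ε < B)
    (h h' N : ℝ → ℝ)
    (hode1 : ∀ s : ℝ, S ≤ s → HasDerivAt h (h' s) s)
    (hode2 : ∀ s : ℝ, S ≤ s → HasDerivAt h' (-(B * h s + N s)) s)
    (hN : ∀ s : ℝ, S ≤ s → |N s| ≤ ε * |h s|)
    (hnz : ∀ s : ℝ, S ≤ s → ¬(h s = 0 ∧ h' s = 0)) :
    ∀ T : ℝ, S ≤ T →
      (∃ s₁ : ℝ, T < s₁ ∧ 0 < h s₁) ∧ (∃ s₂ : ℝ, T < s₂ ∧ h s₂ < 0) := by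
  intro T hTS
  refine ⟨?_, exists_neg_after_of_perturbed_oscillator hεB hode1 hode2 hN hnz hTS⟩
  obtain ⟨s, hTs, hs⟩ := exists_neg_after_of_perturbed_oscillator (h := fun s => -h s)
    (h' := fun s => -h' s) (N := fun s => -N s) hεB
    (fun s hs => (hode1 s hs).neg)
    (fun s hs => (hode2 s hs).neg.congr_deriv (by ring))
    (fun s hs => by simpa only [abs_neg] using hN s hs)
    (fun s hs hc => hnz s hs ⟨neg_eq_zero.mp hc.1, neg_eq_zero.mp hc.2⟩) hTS
  exact ⟨s, hTs, neg_neg_iff_pos.mp hs⟩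

/-- oscillation for the perturbed linear oscillator `h'' + B h + N = 0`
with `|N| ≤ ε |h|`, `0 < ε < B`: `h` changes sign infinitely often as `s → +∞`. -/
theorem perturbed_oscillator_sign_changes
    (B ε S : ℝ) (hB : 0 < B) (hε0 : 0 < ε) (hεB : ε < B)
    (h h' N : ℝ → ℝ)
    (hNc : ContinuousOn N (Set.Ici S))
    (hode1 : ∀ s : ℝ, S ≤ s → HasDerivAt h (h' s) s)
    (hode2 : ∀ s : ℝ, S ≤ s → HasDerivAt h' (-(B * h s + N s)) s)
    (hN : ∀ s : ℝ, S ≤ s → |N s| ≤ ε * |h s|)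
    (hnz : ∀ s : ℝ, S ≤ s → ¬(h s = 0 ∧ h' s = 0)) :
    ∀ T : ℝ, S ≤ T →
      (∃ s₁ : ℝ, T < s₁ ∧ 0 < h s₁) ∧ (∃ s₂ : ℝ, T < s₂ ∧ h s₂ < 0) :=
  perturbed_oscillator_sign_changes_general B ε S hεB h h' N hode1 hode2 hN hnz
end
end

section
/- Let A, B ∈ ℝ with B > 0 and A² < 4B, let ε ∈ (0, B - |A|·√B/2), and let S ∈ ℝ. Let h : [S,∞) → ℝ be C² and N : [S,∞) → ℝ continuous, with h''(s) - A·h'(s) + B·h(s) + N(s) = 0 for all s ≥ S, |N(s)| ≤ ε·|h(s)| for all s ≥ S, and (h(s), h'(s)) ≠ (0,0) for all s ≥ S. Then h changes sign infinitely often as s → +∞: for every T ≥ S there exist s₁, s₂ > T with h(s₁) > 0 and h(s₂) < 0. -/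
open Real Filter Set MeasureTheory

noncomputable section

/-!
Away from zeros of `h`, the quotient `v = h'/h - A/2` satisfies the Riccati inequality
`v' ≤ -(v² + δ)` with `δ = B - ε - A²/4 > 0`, and no function does so on a whole half-line
(`arctan (v/√δ)` would decrease at rate at least `√δ` while staying bounded). Hence `h` has
zeros arbitrarily far out; since `(h, h')` never vanishes, each of them is simple and `h`
changes sign there.
-/

open Topology

lemma false_of_riccati_ineq_on_Ioi {v v' : ℝ → ℝ} {δ T : ℝ} (hδ : 0 < δ)
    (hv : ∀ s, T < s → HasDerivAt v (v' s) s)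
    (hle : ∀ s, T < s → v' s ≤ -(v s ^ 2 + δ)) : False := by
  set c := √δ
  have hc : 0 < c := sqrt_pos.2 hδ
  have hcδ : c ^ 2 = δ := sq_sqrt hδ.le
  let g s := arctan (v s / c) + c * s
  have hg : ∀ s, T < s → HasDerivAt g (1 / (1 + (v s / c) ^ 2) * (v' s / c) + c) s :=
    fun s hs => (((hv s hs).div_const c).arctan).add ((hasDerivAt_id s).const_mul c)
      |>.congr_deriv (by simp)
  have hg_nonpos : ∀ s, T < s → 1 / (1 + (v s / c) ^ 2) * (v' s / c) + c ≤ 0 := by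
    intro s hs
    have := hle s hs
    rw [← hcδ] at this
    field_simp
    nlinarith
  have hanti : AntitoneOn g (Ioi T) := by
    refine antitoneOn_of_hasDerivWithinAt_nonpos
      (f' := fun s => 1 / (1 + (v s / c) ^ 2) * (v' s / c) + c) (convex_Ioi T)
      (fun s hs => (hg s hs).continuousAt.continuousWithinAt) (fun s hs => ?_) (fun s hs => ?_)
    · rw [interior_Ioi] at hs ⊢; exact (hg s hs).hasDerivWithinAt
    · rw [interior_Ioi] at hs; exact hg_nonpos s hs
  have hπc : 0 < π / c := by positivity
  have hdrop := hanti (mem_Ioi.2 (lt_add_one T)) (b := T + 1 + π / c) (mem_Ioi.2 (by linarith))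
    (by linarith)
  simp only [g] at hdrop
  have : c * (π / c) = π := by field_simp
  nlinarith [arctan_lt_pi_div_two (v (T + 1) / c),
    neg_pi_div_two_lt_arctan (v (T + 1 + π / c) / c)]

lemma eventually_sign_of_hasDerivAt_pos {f : ℝ → ℝ} {f' z : ℝ} (hf : HasDerivAt f f' z)
    (hz : f z = 0) (hf' : 0 < f') : (∀ᶠ y in 𝓝[>] z, 0 < f y) ∧ ∀ᶠ y in 𝓝[<] z, f y < 0 := by
  obtain ⟨hleft, hright⟩ := hasDerivAt_iff_tendsto_slope_left_right.mp hf
  constructor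
  · filter_upwards [hright.eventually (eventually_gt_nhds hf'), self_mem_nhdsWithin]
      with y hslope hy
    rw [slope_def_field, hz, sub_zero] at hslope
    exact (div_pos_iff_of_pos_right (sub_pos.2 hy)).mp hslope
  · filter_upwards [hleft.eventually (eventually_gt_nhds hf'), self_mem_nhdsWithin]
      with y hslope hy
    rw [slope_def_field, hz, sub_zero] at hslope
    exact ((div_pos_iff.mp hslope).resolve_left fun h => lt_asymm (sub_neg.2 hy) h.2).1

lemma exists_gt_pos_and_neg_of_hasDerivAt_ne_zero {f : ℝ → ℝ} {f' z T : ℝ}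
    (hf : HasDerivAt f f' z) (hz : f z = 0) (hf' : f' ≠ 0) (hTz : T < z) :
    (∃ p, T < p ∧ 0 < f p) ∧ ∃ q, T < q ∧ f q < 0 := by
  have hT_left : ∀ᶠ y in 𝓝[<] z, T < y :=
    eventually_nhdsWithin_of_eventually_nhds (eventually_gt_nhds hTz)
  have hT_right : ∀ᶠ y in 𝓝[>] z, T < y :=
    eventually_nhdsWithin_of_eventually_nhds (eventually_gt_nhds hTz)
  rcases hf'.lt_or_gt with hneg | hpos
  · obtain ⟨hright, hleft⟩ :=
      eventually_sign_of_hasDerivAt_pos hf.neg (by simp [hz]) (neg_pos.2 hneg)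
    exact ⟨(hT_left.and hleft).exists.imp fun y hy => ⟨hy.1, by simpa using hy.2⟩,
      (hT_right.and hright).exists.imp fun y hy => ⟨hy.1, by simpa using hy.2⟩⟩
  · obtain ⟨hright, hleft⟩ := eventually_sign_of_hasDerivAt_pos hf hz hpos
    exact ⟨(hT_right.and hright).exists, (hT_left.and hleft).exists⟩

lemma sub_sub_sq_div_four_pos {A B ε : ℝ} (hAB : A ^ 2 < 4 * B)
    (hεB : ε < B - |A| * √B / 2) : 0 < B - ε - A ^ 2 / 4 := by
  have hA : |A| / 2 ≤ √B := Real.le_sqrt_of_sq_le (by rw [div_pow, sq_abs]; linarith)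
  have : A ^ 2 / 4 ≤ |A| * √B / 2 := by
    nlinarith [mul_le_mul_of_nonneg_left hA (abs_nonneg A), sq_abs A]
  linarith

lemma perturbed_oscillator_exists_zero_gt {A B ε T : ℝ} {h h' N : ℝ → ℝ}
    (hδ : 0 < B - ε - A ^ 2 / 4)
    (hh : ∀ s, T < s → HasDerivAt h (h' s) s)
    (hh' : ∀ s, T < s → HasDerivAt h' (A * h' s - B * h s - N s) s)
    (hN : ∀ s, T < s → |N s| ≤ ε * |h s|) : ∃ z, T < z ∧ h z = 0 := by
  by_contra! hne
  refine false_of_riccati_ineq_on_Ioi hδ (v := fun s => h' s / h s - A / 2)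
    (fun s hs => ((hh' s hs).div (hh s hs) (hne s hs)).sub_const (A / 2)) fun s hs => ?_
  have hs0 : h s ≠ 0 := hne s hs
  have hsq : 0 < h s ^ 2 := sq_pos_of_ne_zero hs0
  have hNh : -(ε * h s ^ 2) ≤ N s * h s := by
    have : |N s * h s| ≤ ε * h s ^ 2 := by
      rw [abs_mul, ← sq_abs (h s), sq, ← mul_assoc]
      exact mul_le_mul_of_nonneg_right (hN s hs) (abs_nonneg _)
    linarith [neg_abs_le (N s * h s)]
  rw [div_le_iff₀ hsq]
  have hexpand : -((h' s / h s - A / 2) ^ 2 + (B - ε - A ^ 2 / 4)) * h s ^ 2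
      = -(h' s - A / 2 * h s) ^ 2 - (B - ε - A ^ 2 / 4) * h s ^ 2 := by
    field_simp
    ring
  rw [hexpand]
  nlinarith

theorem damped_perturbed_oscillator_sign_changes_general
    (A B ε S : ℝ) (hAB : A ^ 2 < 4 * B)
    (hεB : ε < B - |A| * Real.sqrt B / 2)
    (h h' N : ℝ → ℝ)
    (hode1 : ∀ s : ℝ, S ≤ s → HasDerivAt h (h' s) s)
    (hode2 : ∀ s : ℝ, S ≤ s → HasDerivAt h' (A * h' s - B * h s - N s) s)
    (hN : ∀ s : ℝ, S ≤ s → |N s| ≤ ε * |h s|)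
    (hnz : ∀ s : ℝ, S ≤ s → ¬(h s = 0 ∧ h' s = 0)) :
    ∀ T : ℝ, S ≤ T →
      (∃ s₁ : ℝ, T < s₁ ∧ 0 < h s₁) ∧ (∃ s₂ : ℝ, T < s₂ ∧ h s₂ < 0) := by
  intro T hT
  obtain ⟨z, hTz, hz⟩ := perturbed_oscillator_exists_zero_gt (T := T)
    (sub_sub_sq_div_four_pos hAB hεB) (fun s hs => hode1 s (by linarith))
    (fun s hs => hode2 s (by linarith)) (fun s hs => hN s (by linarith))
  have hSz : S ≤ z := by linarith
  exact exists_gt_pos_and_neg_of_hasDerivAt_ne_zero (hode1 z hSz) hz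
    (fun hz' => hnz z hSz ⟨hz, hz'⟩) hTz

/-- oscillation for the damped perturbed oscillator
`h'' - A h' + B h + N = 0` with `A² < 4B`, `|N| ≤ ε |h|`, `0 < ε < B - |A|√B/2`. -/
theorem damped_perturbed_oscillator_sign_changes
    (A B ε S : ℝ) (hB : 0 < B) (hAB : A ^ 2 < 4 * B)
    (hε0 : 0 < ε) (hεB : ε < B - |A| * Real.sqrt B / 2)
    (h h' N : ℝ → ℝ)
    (hNc : ContinuousOn N (Set.Ici S))
    (hode1 : ∀ s : ℝ, S ≤ s → HasDerivAt h (h' s) s)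
    (hode2 : ∀ s : ℝ, S ≤ s → HasDerivAt h' (A * h' s - B * h s - N s) s)
    (hN : ∀ s : ℝ, S ≤ s → |N s| ≤ ε * |h s|)
    (hnz : ∀ s : ℝ, S ≤ s → ¬(h s = 0 ∧ h' s = 0)) :
    ∀ T : ℝ, S ≤ T →
      (∃ s₁ : ℝ, T < s₁ ∧ 0 < h s₁) ∧ (∃ s₂ : ℝ, T < s₂ ∧ h s₂ < 0) :=
  damped_perturbed_oscillator_sign_changes_general A B ε S hAB hεB h h' N hode1 hode2 hN hnz
end
end

section
/- Let n > 2 be an integer and l > 2_* (so 0 < m(l) < n-2). Let g : (0,∞) × ℝ → [0,∞) be continuous, C¹ in its first variable, and Lipschitz in its first variable on every compact subset of (0,∞) × ℝ. Suppose there are P₁ > 0 and B > 0 such that A(l)² < 4B and, for every ε > 0, there exist δ > 0 and S ∈ ℝ with |(∂g/∂y₁)(y, s) - (B + C(l))| < ε whenever |y - P₁| < δ and s > S. Let ȳ = (ȳ₁, ȳ₂) and ỹ = (ỹ₁, ỹ₂) be two distinct solutions, on some interval [S₀, ∞), of the system ẏ₁ = m(l)·y₁ + y₂, ẏ₂ =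 -(n - 2 - m(l))·y₂ - g(y₁, s), both converging to the point (P₁, -m(l)·P₁) as s → +∞. Then ȳ₁ - ỹ₁ changes sign infinitely often as s → +∞: for every T ≥ S₀ there exist s₁, s₂ > T with ȳ₁(s₁) > ỹ₁(s₁) and ȳ₁(s₂) < ỹ₁(s₂). (Consequently, the two corresponding slow-decay solutions Ū(r) = ȳ₁(ln r)·r^{-m(l)} and Ũ(r) = ỹ₁(ln r)·r^{-m(l)} of the radial stationary equation satisfy: Ū - Ũ changes sign infinitely many times as r → +∞.) -/
/-!
The difference `z = ȳ - ỹ` never vanishes, by backward uniqueness for the system, which is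
Lipschitz along the two trajectories. It solves `z₁' = m z₁ + z₂`, `z₂' = -(k - m) z₂ - q z₁`
with `k = n - 2`, where by the mean value theorem the difference quotient `q` of `g` tends to
`B + C(l)`, and `B + C(l) > k² / 4` is exactly `A(l)² < 4B`. If `z₁` kept a sign on a half-line,
it could not vanish there either (a zero would be a local extremum, forcing `z₂ = 0`), so the
Riccati variable `u = z₂ / z₁ + k / 2` would satisfy `u' ≤ -(u² + η)` with `η > 0` for all
large times; then `arctan (u / √η)` would decrease at rate at least `√η` forever, which is
impossible.
-/

open Real Filter Set MeasureTheory

noncomputable section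

open Topology

theorem false_of_hasDerivAt_le_neg_sq_sub {u u' : ℝ → ℝ} {a c : ℝ} (hc : 0 < c)
    (hu : ∀ s, a ≤ s → HasDerivAt u (u' s) s) (hu' : ∀ s, a ≤ s → u' s ≤ -(u s ^ 2 + c)) :
    False := by
  set r := √c
  have hr : 0 < r := Real.sqrt_pos.2 hc
  have hψ : ∀ s, a ≤ s →
      HasDerivAt (fun t => arctan (u t / r)) (1 / (1 + (u s / r) ^ 2) * (u' s / r)) s :=
    fun s hs => ((hu s hs).div_const r).arctan
  have hψ_le : ∀ s, a ≤ s → 1 / (1 + (u s / r) ^ 2) * (u' s / r) ≤ -r := by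
    intro s hs
    have hrc : r ^ 2 = c := Real.sq_sqrt hc.le
    have : 1 / (1 + (u s / r) ^ 2) * (u' s / r) = r * u' s / (u s ^ 2 + c) := by
      field_simp
      rw [hrc]
      ring
    rw [this, div_le_iff₀ (by positivity)]
    nlinarith [hu' s hs]
  obtain ⟨ξ, hξ, hslope⟩ := exists_hasDerivAt_eq_slope (fun t => arctan (u t / r)) _
    (lt_add_of_pos_right a (div_pos pi_pos hr))
    (HasDerivAt.continuousOn fun s hs => hψ s hs.1)
    (fun s hs => hψ s hs.1.le)
  have hdrop := hψ_le ξ hξ.1.le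
  rw [hslope, add_sub_cancel_left, div_le_iff₀ (div_pos pi_pos hr), neg_mul,
    mul_div_cancel₀ _ hr.ne'] at hdrop
  linarith [arctan_lt_pi_div_two (u a / r), neg_pi_div_two_lt_arctan (u (a + π / r) / r)]

theorem exists_zero_of_linear_focus {z₁ z₂ q : ℝ → ℝ} {m k η a : ℝ} (hη : 0 < η)
    (hz₁ : ∀ s, a ≤ s → HasDerivAt z₁ (m * z₁ s + z₂ s) s)
    (hz₂ : ∀ s, a ≤ s → HasDerivAt z₂ (-((k - m) * z₂ s) - q s * z₁ s) s)
    (hq : ∀ s, a ≤ s → k ^ 2 / 4 + η ≤ q s) :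
    ∃ s, a ≤ s ∧ z₁ s = 0 := by
  by_contra! hne
  refine false_of_hasDerivAt_le_neg_sq_sub hη (u := fun s => z₂ s / z₁ s + k / 2)
    (u' := fun s => -((z₂ s / z₁ s + k / 2) ^ 2 + (q s - k ^ 2 / 4))) (fun s hs => ?_)
    (fun s hs => by linarith [hq s hs])
  refine (((hz₂ s hs).div (hz₁ s hs) (hne s hs)).add_const (k / 2)).congr_deriv ?_
  have := hne s hs
  field_simp
  ring

theorem lt_div_sub_of_lt_hasDerivAt {f f' : ℝ → ℝ} {D : Set ℝ} (hD : D.OrdConnected)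
    (hf : ∀ x ∈ D, HasDerivAt f (f' x) x) {β : ℝ} (hβ : ∀ x ∈ D, β < f' x) {x y : ℝ}
    (hx : x ∈ D) (hy : y ∈ D) (hxy : x ≠ y) : β < (f x - f y) / (x - y) := by
  wlog hlt : x < y generalizing x y
  · rw [← neg_div_neg_eq, neg_sub, neg_sub]
    exact this hy hx hxy.symm (hxy.lt_or_gt.resolve_left hlt)
  obtain ⟨ξ, hξ, hslope⟩ := exists_hasDerivAt_eq_slope f f' hlt
    (HasDerivAt.continuousOn fun z hz => hf z (hD.out hx hy hz))
    (fun z hz => hf z (hD.out hx hy (Ioo_subset_Icc_self hz)))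
  rw [← neg_div_neg_eq, neg_sub, neg_sub, ← hslope]
  exact hβ ξ (hD.out hx hy (Ioo_subset_Icc_self hξ))

theorem eventually_lt_div_sub {g gy : ℝ → ℝ → ℝ} {P β ε : ℝ} (hε : 0 < ε)
    (hgy : ∀ s y, 0 < y → HasDerivAt (fun z => g z s) (gy y s) y)
    (hconv : ∀ ε, 0 < ε → ∃ δ, 0 < δ ∧ ∃ S, ∀ y s, |y - P| < δ → S < s → |gy y s - β| < ε)
    {x y : ℝ → ℝ} (hx : Tendsto x atTop (𝓝 P)) (hy : Tendsto y atTop (𝓝 P))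
    (hx₀ : ∀ᶠ s in atTop, 0 < x s) (hy₀ : ∀ᶠ s in atTop, 0 < y s) :
    ∀ᶠ s in atTop, x s ≠ y s → β - ε < (g (x s) s - g (y s) s) / (x s - y s) := by
  obtain ⟨δ, hδ, S, hS⟩ := hconv ε hε
  have hD : (Ioi 0 ∩ Metric.ball P δ).OrdConnected :=
    ((convex_Ioi 0).inter (convex_ball P δ)).ordConnected
  filter_upwards [hx₀, hy₀, hx.eventually (Metric.ball_mem_nhds P hδ),
    hy.eventually (Metric.ball_mem_nhds P hδ), eventually_gt_atTop S]
    with s hx₀ hy₀ hxP hyP hs hxy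
  refine lt_div_sub_of_lt_hasDerivAt hD (fun z hz => hgy s z hz.1) (fun z hz => ?_)
    ⟨hx₀, hxP⟩ ⟨hy₀, hyP⟩ hxy
  linarith [(abs_lt.1 (hS z s (Real.dist_eq z P ▸ hz.2) hs)).1]

theorem neg_of_nonpos_of_hasDerivAt {z₁ z₂ : ℝ → ℝ} {m s : ℝ}
    (hd : HasDerivAt z₁ (m * z₁ s + z₂ s) s) (hle : ∀ᶠ t in 𝓝 s, z₁ t ≤ 0)
    (hne : z₁ s ≠ 0 ∨ z₂ s ≠ 0) : z₁ s < 0 := by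
  refine hle.self_of_nhds.lt_of_ne fun h₀ => hne.elim (· h₀) fun h₂ => h₂ ?_
  have hmax : IsLocalMax z₁ s := hle.mono fun t ht => h₀ ▸ ht
  simpa [h₀] using hmax.hasDerivAt_eq_zero hd

/-- In the paper's notation `m = m(l)` and `k = n - 2`. -/
def SolvesFowler (m k : ℝ) (g : ℝ → ℝ → ℝ) (S₀ : ℝ) (y₁ y₂ : ℝ → ℝ) : Prop :=
  ∀ s, S₀ ≤ s → HasDerivAt y₁ (m * y₁ s + y₂ s) s ∧
    HasDerivAt y₂ (-((k - m) * y₂ s) - g (y₁ s) s) s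

def fowlerField (m k : ℝ) (g : ℝ → ℝ → ℝ) (s : ℝ) (y : ℝ × ℝ) : ℝ × ℝ :=
  (m * y.1 + y.2, -((k - m) * y.2) - g y.1 s)

theorem lipschitzOnWith_fowlerField (m k : ℝ) {g : ℝ → ℝ → ℝ} {s L : ℝ} {A : Set ℝ}
    (hg : ∀ x ∈ A, ∀ y ∈ A, |g x s - g y s| ≤ L * |x - y|) :
    LipschitzOnWith (Real.toNNReal (|m| + 1 + |k - m| + |L|)) (fowlerField m k g s)
      {y | y.1 ∈ A} := by
  refine LipschitzOnWith.of_dist_le_mul fun x hx y hy => ?_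
  rw [Real.coe_toNNReal _ (by positivity), Prod.dist_eq, Prod.dist_eq]
  simp only [fowlerField, Real.dist_eq]
  set d := max |x.1 - y.1| |x.2 - y.2|
  have h₁ : |x.1 - y.1| ≤ d := le_max_left _ _
  have h₂ : |x.2 - y.2| ≤ d := le_max_right _ _
  have hd : 0 ≤ d := (abs_nonneg _).trans h₁
  have hgd : |g x.1 s - g y.1 s| ≤ |L| * d :=
    (hg _ hx _ hy).trans (mul_le_mul (le_abs_self L) h₁ (abs_nonneg _) (abs_nonneg _))
  apply max_le
  · calc |m * x.1 + x.2 - (m * y.1 + y.2)| = |m * (x.1 - y.1) + (x.2 - y.2)| := by ring_nf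
      _ ≤ |m| * d + d := by grw [abs_add_le, abs_mul, h₁, h₂]
      _ ≤ _ := by nlinarith [abs_nonneg (k - m), abs_nonneg L]
  · calc |-((k - m) * x.2) - g x.1 s - (-((k - m) * y.2) - g y.1 s)|
        = |-((k - m) * (x.2 - y.2)) - (g x.1 s - g y.1 s)| := by ring_nf
      _ ≤ |k - m| * d + |L| * d := by grw [abs_sub, abs_neg, abs_mul, h₂, hgd]
      _ ≤ _ := by nlinarith [abs_nonneg m]

namespace SolvesFowler

variable {m k S₀ : ℝ} {g : ℝ → ℝ → ℝ} {y₁ y₂ z₁ z₂ : ℝ → ℝ}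

theorem hasDerivAt_prod (h : SolvesFowler m k g S₀ y₁ y₂) {s : ℝ} (hs : S₀ ≤ s) :
    HasDerivAt (fun t => (y₁ t, y₂ t)) (fowlerField m k g s (y₁ s, y₂ s)) s :=
  (h s hs).1.prodMk (h s hs).2

theorem hasDerivAt_sub (hy : SolvesFowler m k g S₀ y₁ y₂) (hz : SolvesFowler m k g S₀ z₁ z₂)
    {s : ℝ} (hs : S₀ ≤ s) :
    HasDerivAt (y₁ - z₁) (m * (y₁ - z₁) s + (y₂ - z₂) s) s ∧
      HasDerivAt (y₂ - z₂) (-((k - m) * (y₂ - z₂) s) - (g (y₁ s) s - g (z₁ s) s)) s := by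
  constructor
  · exact ((hy s hs).1.sub (hz s hs).1).congr_deriv (by simp only [Pi.sub_apply]; ring)
  · exact ((hy s hs).2.sub (hz s hs).2).congr_deriv (by simp only [Pi.sub_apply]; ring)

theorem eq_of_eq_of_le (hy : SolvesFowler m k g S₀ y₁ y₂) (hz : SolvesFowler m k g S₀ z₁ z₂)
    (hy₀ : ∀ s, S₀ ≤ s → 0 < y₁ s) (hz₀ : ∀ s, S₀ ≤ s → 0 < z₁ s)
    (hlip : ∀ K : Set (ℝ × ℝ), IsCompact K → K ⊆ Ioi 0 ×ˢ univ →
      ∃ L : ℝ, ∀ p ∈ K, ∀ q ∈ K, p.2 = q.2 → |g p.1 p.2 - g q.1 q.2| ≤ L * |p.1 - q.1|)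
    {a b : ℝ} (ha : S₀ ≤ a) (hab : a ≤ b) (heq : (y₁ b, y₂ b) = (z₁ b, z₂ b)) :
    (y₁ a, y₂ a) = (z₁ a, z₂ a) := by
  have hgraph : ∀ {x₁ x₂ : ℝ → ℝ}, SolvesFowler m k g S₀ x₁ x₂ →
      IsCompact ((fun s => (x₁ s, s)) '' Icc a b) := fun h =>
    isCompact_Icc.image_of_continuousOn
      ((HasDerivAt.continuousOn fun s hs => (h s (ha.trans hs.1)).1).prodMk continuousOn_id)
  set K := (fun s => (y₁ s, s)) '' Icc a b ∪ (fun s => (z₁ s, s)) '' Icc a b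
  obtain ⟨L, hL⟩ := hlip K ((hgraph hy).union (hgraph hz)) <| by
    rintro _ (⟨s, hs, rfl⟩ | ⟨s, hs, rfl⟩)
    exacts [⟨hy₀ s (ha.trans hs.1), trivial⟩, ⟨hz₀ s (ha.trans hs.1), trivial⟩]
  refine ODE_solution_unique_of_mem_Icc_left (v := fowlerField m k g)
    (s := fun t => {x | x.1 ∈ {x₁ | (x₁, t) ∈ K}})
    (fun t _ => lipschitzOnWith_fowlerField m k fun x hx x' hx' => hL _ hx _ hx' rfl)
    (HasDerivAt.continuousOn fun s hs => hy.hasDerivAt_prod (ha.trans hs.1))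
    (fun s hs => (hy.hasDerivAt_prod (ha.trans hs.1.le)).hasDerivWithinAt)
    (fun s hs => Or.inl ⟨s, Ioc_subset_Icc_self hs, rfl⟩)
    (HasDerivAt.continuousOn fun s hs => hz.hasDerivAt_prod (ha.trans hs.1))
    (fun s hs => (hz.hasDerivAt_prod (ha.trans hs.1.le)).hasDerivWithinAt)
    (fun s hs => Or.inr ⟨s, Ioc_subset_Icc_self hs, rfl⟩) heq ⟨le_rfl, hab⟩

theorem exists_lt_of_tendsto {P B : ℝ} {gy : ℝ → ℝ → ℝ}
    (hy : SolvesFowler m k g S₀ y₁ y₂) (hz : SolvesFowler m k g S₀ z₁ z₂)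
    (hy₀ : ∀ s, S₀ ≤ s → 0 < y₁ s) (hz₀ : ∀ s, S₀ ≤ s → 0 < z₁ s)
    (hlip : ∀ K : Set (ℝ × ℝ), IsCompact K → K ⊆ Ioi 0 ×ˢ univ →
      ∃ L : ℝ, ∀ p ∈ K, ∀ q ∈ K, p.2 = q.2 → |g p.1 p.2 - g q.1 q.2| ≤ L * |p.1 - q.1|)
    (hgy : ∀ s y, 0 < y → HasDerivAt (fun x => g x s) (gy y s) y)
    (hfoc : (k - 2 * m) ^ 2 < 4 * B)
    (hconv : ∀ ε, 0 < ε → ∃ δ, 0 < δ ∧ ∃ S, ∀ y s, |y - P| < δ → S < s →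
      |gy y s - (B + m * (k - m))| < ε)
    (hdist : ∃ s, S₀ ≤ s ∧ (y₁ s, y₂ s) ≠ (z₁ s, z₂ s))
    (hylim : Tendsto y₁ atTop (𝓝 P)) (hzlim : Tendsto z₁ atTop (𝓝 P)) (T : ℝ) :
    ∃ s, T < s ∧ z₁ s < y₁ s := by
  by_contra! hle
  obtain ⟨sd, hsd, hne⟩ := hdist
  set a := max T sd
  have ha : S₀ ≤ a := hsd.trans (le_max_right T sd)
  have hneg : ∀ s, a < s → (y₁ - z₁) s < 0 := by
    intro s hs
    refine neg_of_nonpos_of_hasDerivAt (hy.hasDerivAt_sub hz (ha.trans hs.le)).1 ?_ ?_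
    · filter_upwards [Ioi_mem_nhds ((le_max_left T sd).trans_lt hs)] with t ht
      exact sub_nonpos.2 (hle t ht)
    · by_contra! h
      refine hne (hy.eq_of_eq_of_le hz hy₀ hz₀ hlip hsd ((le_max_right T sd).trans hs.le) ?_)
      simp only [Pi.sub_apply, sub_eq_zero] at h
      rw [h.1, h.2]
  set η := (4 * B - (k - 2 * m) ^ 2) / 8 with hη_def
  have hη : 0 < η := by linarith
  have hgap : k ^ 2 / 4 + η = B + m * (k - m) - η := by rw [hη_def]; ring
  obtain ⟨b, hb⟩ := eventually_atTop.1 <|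
    (eventually_lt_div_sub hη hgy hconv hylim hzlim (eventually_atTop.2 ⟨S₀, hy₀⟩)
      (eventually_atTop.2 ⟨S₀, hz₀⟩)).and (eventually_gt_atTop a)
  have hdiff : ∀ s, b ≤ s → S₀ ≤ s := fun s hs => ha.trans (hb s hs).2.le
  have hq : ∀ s, b ≤ s → (g (y₁ s) s - g (z₁ s) s) / (y₁ s - z₁ s) * (y₁ - z₁) s =
      g (y₁ s) s - g (z₁ s) s := fun s hs => div_mul_cancel₀ _ (hneg s (hb s hs).2).ne
  obtain ⟨s, hs, hzero⟩ := exists_zero_of_linear_focus (a := b)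
    (q := fun s => (g (y₁ s) s - g (z₁ s) s) / (y₁ s - z₁ s)) hη
    (fun s hs => (hy.hasDerivAt_sub hz (hdiff s hs)).1)
    (fun s hs => hq s hs ▸ (hy.hasDerivAt_sub hz (hdiff s hs)).2)
    (fun s hs => by linarith [(hb s hs).1 (sub_ne_zero.1 (hneg s (hb s hs).2).ne)])
  exact (hneg s (hb s hs).2).ne hzero

end SolvesFowler

theorem trajectories_to_focus_cross_infinitely_often_general
    (n : ℕ) (l : ℝ)
    (g gy : ℝ → ℝ → ℝ)
    (hgy : ∀ s : ℝ, ∀ y : ℝ, 0 < y → HasDerivAt (fun z => g z s) (gy y s) y)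
    (hlip : ∀ K : Set (ℝ × ℝ), IsCompact K → K ⊆ Set.Ioi 0 ×ˢ Set.univ →
      ∃ L : ℝ, ∀ p ∈ K, ∀ q ∈ K, p.2 = q.2 →
        |g p.1 p.2 - g q.1 q.2| ≤ L * |p.1 - q.1|)
    (P₁ B : ℝ)
    (hfoc : Paper.Aexp n l ^ 2 < 4 * B)
    (hconv : ∀ ε : ℝ, 0 < ε → ∃ δ : ℝ, 0 < δ ∧ ∃ S : ℝ, ∀ y s : ℝ,
      |y - P₁| < δ → S < s → |gy y s - (B + Paper.Cexp n l)| < ε)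
    (S₀ : ℝ) (yb1 yb2 yt1 yt2 : ℝ → ℝ)
    (hposb : ∀ s : ℝ, S₀ ≤ s → 0 < yb1 s)
    (hpost : ∀ s : ℝ, S₀ ≤ s → 0 < yt1 s)
    (hsysb : ∀ s : ℝ, S₀ ≤ s →
      HasDerivAt yb1 (Paper.mExp l * yb1 s + yb2 s) s ∧
      HasDerivAt yb2 (-(((n : ℝ) - 2 - Paper.mExp l) * yb2 s) - g (yb1 s) s) s)
    (hsyst : ∀ s : ℝ, S₀ ≤ s →
      HasDerivAt yt1 (Paper.mExp l * yt1 s + yt2 s) s ∧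
      HasDerivAt yt2 (-(((n : ℝ) - 2 - Paper.mExp l) * yt2 s) - g (yt1 s) s) s)
    (hdist : ∃ s : ℝ, S₀ ≤ s ∧ (yb1 s, yb2 s) ≠ (yt1 s, yt2 s))
    (hlimb : Tendsto (fun s => (yb1 s, yb2 s)) atTop
      (nhds (P₁, -Paper.mExp l * P₁)))
    (hlimt : Tendsto (fun s => (yt1 s, yt2 s)) atTop
      (nhds (P₁, -Paper.mExp l * P₁))) :
    ∀ T : ℝ, S₀ ≤ T →
      (∃ s₁ : ℝ, T < s₁ ∧ yt1 s₁ < yb1 s₁) ∧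
      (∃ s₂ : ℝ, T < s₂ ∧ yb1 s₂ < yt1 s₂) := by
  have hb : SolvesFowler (Paper.mExp l) ((n : ℝ) - 2) g S₀ yb1 yb2 := hsysb
  have ht : SolvesFowler (Paper.mExp l) ((n : ℝ) - 2) g S₀ yt1 yt2 := hsyst
  have hlimb₁ : Tendsto yb1 atTop (𝓝 P₁) := (continuous_fst.tendsto _).comp hlimb
  have hlimt₁ : Tendsto yt1 atTop (𝓝 P₁) := (continuous_fst.tendsto _).comp hlimt
  intro T _
  exact ⟨hb.exists_lt_of_tendsto ht hposb hpost hlip hgy hfoc hconv hdist hlimb₁ hlimt₁ T,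
    ht.exists_lt_of_tendsto hb hpost hposb hlip hgy hfoc hconv
      (hdist.imp fun _ h => ⟨h.1, h.2.symm⟩) hlimt₁ hlimb₁ T⟩

/-- two distinct trajectories of the Fowler system converging to the same
focus-type critical point `(P₁, -m(l)P₁)` cross each other infinitely many times. -/
theorem trajectories_to_focus_cross_infinitely_often
    (n : ℕ) (hn : 2 < n) (l : ℝ) (hl : Paper.twoLow n < l)
    (g gy : ℝ → ℝ → ℝ)
    (hgc : ContinuousOn (fun p : ℝ × ℝ => g p.1 p.2) (Set.Ioi 0 ×ˢ Set.univ))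
    (hgnn : ∀ y s : ℝ, 0 < y → 0 ≤ g y s)
    (hgy : ∀ s : ℝ, ∀ y : ℝ, 0 < y → HasDerivAt (fun z => g z s) (gy y s) y)
    (hlip : ∀ K : Set (ℝ × ℝ), IsCompact K → K ⊆ Set.Ioi 0 ×ˢ Set.univ →
      ∃ L : ℝ, ∀ p ∈ K, ∀ q ∈ K, p.2 = q.2 →
        |g p.1 p.2 - g q.1 q.2| ≤ L * |p.1 - q.1|)
    (P₁ B : ℝ) (hP₁ : 0 < P₁) (hB : 0 < B)
    (hfoc : Paper.Aexp n l ^ 2 < 4 * B)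
    (hconv : ∀ ε : ℝ, 0 < ε → ∃ δ : ℝ, 0 < δ ∧ ∃ S : ℝ, ∀ y s : ℝ,
      |y - P₁| < δ → S < s → |gy y s - (B + Paper.Cexp n l)| < ε)
    (S₀ : ℝ) (yb1 yb2 yt1 yt2 : ℝ → ℝ)
    (hposb : ∀ s : ℝ, S₀ ≤ s → 0 < yb1 s)
    (hpost : ∀ s : ℝ, S₀ ≤ s → 0 < yt1 s)
    (hsysb : ∀ s : ℝ, S₀ ≤ s →
      HasDerivAt yb1 (Paper.mExp l * yb1 s + yb2 s) s ∧
      HasDerivAt yb2 (-(((n : ℝ) - 2 - Paper.mExp l) * yb2 s) - g (yb1 s) s) s)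
    (hsyst : ∀ s : ℝ, S₀ ≤ s →
      HasDerivAt yt1 (Paper.mExp l * yt1 s + yt2 s) s ∧
      HasDerivAt yt2 (-(((n : ℝ) - 2 - Paper.mExp l) * yt2 s) - g (yt1 s) s) s)
    (hdist : ∃ s : ℝ, S₀ ≤ s ∧ (yb1 s, yb2 s) ≠ (yt1 s, yt2 s))
    (hlimb : Tendsto (fun s => (yb1 s, yb2 s)) atTop
      (nhds (P₁, -Paper.mExp l * P₁)))
    (hlimt : Tendsto (fun s => (yt1 s, yt2 s)) atTop
      (nhds (P₁, -Paper.mExp l * P₁))) :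
    ∀ T : ℝ, S₀ ≤ T →
      (∃ s₁ : ℝ, T < s₁ ∧ yt1 s₁ < yb1 s₁) ∧
      (∃ s₂ : ℝ, T < s₂ ∧ yb1 s₂ < yt1 s₂) :=
  trajectories_to_focus_cross_infinitely_often_general n l g gy hgy hlip P₁ B hfoc hconv S₀ yb1 yb2
    yt1 yt2 hposb hpost hsysb hsyst hdist hlimb hlimt
end
end

section
/- Let n > 2 be an integer and f : [0,∞) × (0,∞) → [0,∞) locally Lipschitz. Let U₁, U₂ be positive C² solutions of the radial stationary equation U''(r) + ((n-1)/r)·U'(r) + f(U(r), r) = 0 on (0,∞) such that U₂(r) > U₁(r) for all sufficiently small r > 0, and suppose the set {R > 0 : U₂(R) = U₁(R)} is nonempty. Then Z := inf{R > 0 : U₂(R) = U₁(R)} satisfies Z > 0, U₂(r) > U₁(r) for all r ∈ (0, Z), U₂(Z) = U₁(Z), and U₂'(Z) < U₁'(Z). -/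
open Real Filter Set MeasureTheory

noncomputable section

/-!
At the first crossing point `Z` the difference `U₂ - U₁` vanishes and is positive just before
`Z`, so its derivative there is `≤ 0`. If it were `0`, then `(U₁, U₁')` and `(U₂, U₂')` would be
two solutions of the same first-order system with the same value at `Z`; the right-hand side is
Lipschitz in the state near `(U₁ Z, Z)`, so by uniqueness for the Cauchy problem `U₁ = U₂` near
`Z`, contradicting `U₁ < U₂` on `(0, Z)`.
-/

open Function Metric
open scoped NNReal Topology

lemma locallyLipschitzOn_uncurry_of_local_bound {f : ℝ → ℝ → ℝ}
    (hf : ∀ p : ℝ × ℝ, 0 ≤ p.1 → 0 < p.2 → ∃ K ε : ℝ, 0 < ε ∧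
      ∀ a b : ℝ × ℝ, 0 ≤ a.1 → 0 < a.2 → 0 ≤ b.1 → 0 < b.2 →
        dist a p < ε → dist b p < ε → |f a.1 a.2 - f b.1 b.2| ≤ K * dist a b) :
    LocallyLipschitzOn (Ici 0 ×ˢ Ioi 0) (uncurry f) := by
  rintro p ⟨hp₁, hp₂⟩
  obtain ⟨K, ε, hε, hK⟩ := hf p hp₁ hp₂
  refine ⟨K.toNNReal, Ici 0 ×ˢ Ioi 0 ∩ ball p ε,
    inter_mem_nhdsWithin _ (ball_mem_nhds p hε), LipschitzOnWith.of_dist_le' ?_⟩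
  rintro a ⟨⟨ha₁, ha₂⟩, ha⟩ b ⟨⟨hb₁, hb₂⟩, hb⟩
  exact hK a b ha₁ ha₂ hb₁ hb₂ ha hb

/-- The radial equation as a first-order system in the state `y = (U, U')`. -/
def radialField (n : ℕ) (f : ℝ → ℝ → ℝ) (r : ℝ) (y : ℝ × ℝ) : ℝ × ℝ :=
  (y.2, -(((n : ℝ) - 1) / r * y.2 + f y.1 r))

lemma Paper.SolOn.hasDerivAt_radialField {n : ℕ} {f : ℝ → ℝ → ℝ} {U U' : ℝ → ℝ} {S : Set ℝ}
    (h : Paper.SolOn n f U U' S) {r : ℝ} (hr : r ∈ S) :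
    HasDerivAt (fun r => (U r, U' r)) (radialField n f r (U r, U' r)) r :=
  (h r hr).1.prodMk (h r hr).2

lemma lipschitzOnWith_radialField {n : ℕ} {f : ℝ → ℝ → ℝ} {r : ℝ} {A : Set ℝ} {C K : ℝ≥0}
    (hC : |((n : ℝ) - 1) / r| ≤ C) (hf : LipschitzOnWith K (fun u => f u r) A) :
    LipschitzOnWith (1 + C + K) (radialField n f r) (Prod.fst ⁻¹' A) := by
  refine LipschitzOnWith.of_dist_le_mul fun y hy z hz => ?_
  have hfyz : |f y.1 r - f z.1 r| ≤ K * |y.1 - z.1| := by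
    simpa [Real.dist_eq] using hf.dist_le_mul y.1 hy z.1 hz
  have hlin : |((n : ℝ) - 1) / r * y.2 - ((n : ℝ) - 1) / r * z.2| ≤ C * |y.2 - z.2| := by
    rw [← mul_sub, abs_mul]
    exact mul_le_mul_of_nonneg_right hC (abs_nonneg _)
  have h₁ : |y.1 - z.1| ≤ dist y z := le_max_left _ _
  have h₂ : |y.2 - z.2| ≤ dist y z := le_max_right _ _
  have hsecond : (radialField n f r y).2 - (radialField n f r z).2 =
      -((((n : ℝ) - 1) / r * y.2 - ((n : ℝ) - 1) / r * z.2) + (f y.1 r - f z.1 r)) := by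
    simp only [radialField]; ring
  rw [Prod.dist_eq, Real.dist_eq, Real.dist_eq, max_le_iff, hsecond, abs_neg]
  simp only [radialField, NNReal.coe_add, NNReal.coe_one]
  constructor
  · nlinarith [C.2, K.2, abs_nonneg (y.1 - z.1)]
  · refine (abs_add_le _ _).trans ?_
    nlinarith [C.2, K.2, abs_nonneg (y.1 - z.1), abs_nonneg (y.2 - z.2)]

theorem Paper.SolOn.eventuallyEq_of_eq_of_deriv_eq {n : ℕ} {f : ℝ → ℝ → ℝ}
    (hf : LocallyLipschitzOn (Ici 0 ×ˢ Ioi 0) (uncurry f)) {U₁ U₁' U₂ U₂' : ℝ → ℝ}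
    (h₁ : Paper.SolOn n f U₁ U₁' (Ioi 0)) (h₂ : Paper.SolOn n f U₂ U₂' (Ioi 0))
    {Z : ℝ} (hZ : 0 < Z) (hU₁ : ∀ᶠ r in 𝓝 Z, 0 ≤ U₁ r) (hU₂ : ∀ᶠ r in 𝓝 Z, 0 ≤ U₂ r)
    (hU : U₁ Z = U₂ Z) (hU' : U₁' Z = U₂' Z) : U₁ =ᶠ[𝓝 Z] U₂ := by
  obtain ⟨K, T, hT, hKT⟩ := hf (show (U₁ Z, Z) ∈ Ici 0 ×ˢ Ioi 0 from ⟨hU₁.self_of_nhds, hZ⟩)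
  have htraj : ∀ {U U' : ℝ → ℝ}, Paper.SolOn n f U U' (Ioi 0) → U Z = U₁ Z →
      (∀ᶠ r in 𝓝 Z, 0 ≤ U r) → ∀ᶠ r in 𝓝 Z,
        HasDerivAt (fun r => (U r, U' r)) (radialField n f r (U r, U' r)) r ∧
          (U r, U' r) ∈ {y : ℝ × ℝ | (y.1, r) ∈ T} := by
    intro U U' h hUZ hnn
    have hgraph : Tendsto (fun r => (U r, r)) (𝓝 Z) (𝓝[Ici 0 ×ˢ Ioi 0] (U₁ Z, Z)) := by
      refine tendsto_nhdsWithin_iff.2 ⟨?_, ?_⟩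
      · rw [← hUZ]; exact (h Z hZ).1.continuousAt.tendsto.prodMk_nhds tendsto_id
      · filter_upwards [hnn, Ioi_mem_nhds hZ] with r h1 h2 using ⟨h1, h2⟩
    filter_upwards [Ioi_mem_nhds hZ, hgraph hT] with r hr hrT
    exact ⟨h.hasDerivAt_radialField hr, hrT⟩
  have hlip : ∀ᶠ r in 𝓝 Z, LipschitzOnWith (1 + ‖((n : ℝ) - 1) / (Z / 2)‖₊ + K)
      (radialField n f r) {y : ℝ × ℝ | (y.1, r) ∈ T} := by
    -- keeping `r > Z / 2` bounds the coefficient `(n - 1) / r` uniformly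
    filter_upwards [Ioi_mem_nhds (half_lt_self hZ)] with r hr
    have hslice : LipschitzOnWith K (fun u => f u r) {u | (u, r) ∈ T} :=
      mul_one K ▸ hKT.comp (LipschitzWith.prodMk_right r).lipschitzOnWith fun _ hu => hu
    refine lipschitzOnWith_radialField ?_ hslice
    rw [coe_nnnorm, Real.norm_eq_abs, abs_div, abs_div, abs_of_pos (half_pos hZ),
      abs_of_pos ((half_pos hZ).trans hr)]
    gcongr
    exact hr.le
  exact (ODE_solution_unique_of_eventually hlip (htraj h₁ rfl hU₁) (htraj h₂ hU.symm hU₂)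
    (by rw [hU, hU'])).fun_comp Prod.fst

lemma HasDerivAt.nonpos_of_eventually_nonneg_left {g : ℝ → ℝ} {g' a : ℝ} (hg : HasDerivAt g g' a)
    (ha : g a = 0) (hnn : ∀ᶠ r in 𝓝[<] a, 0 ≤ g r) : g' ≤ 0 := by
  have hslope : Tendsto (slope g a) (𝓝[<] a) (𝓝 g') :=
    (hasDerivWithinAt_iff_tendsto_slope' (s := Iio a) (lt_irrefl a)).1 hg.hasDerivWithinAt
  refine le_of_tendsto hslope ?_
  filter_upwards [hnn, self_mem_nhdsWithin] with r hr hra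
  rw [slope_def_field, ha, sub_zero]
  exact div_nonpos_of_nonneg_of_nonpos hr (sub_nonpos.2 (le_of_lt hra))

section FirstCrossing

variable {u v : ℝ → ℝ} {r₀ : ℝ}

def crossingSet (u v : ℝ → ℝ) : Set ℝ := {R | 0 < R ∧ v R = u R}

lemma crossingSet_eq (hr₀ : 0 < r₀) (hlt : ∀ r, 0 < r → r < r₀ → u r < v r) :
    crossingSet u v = {R ∈ Ici r₀ | v R = u R} := by
  ext R
  constructor
  · rintro ⟨hR, hvu⟩
    exact ⟨le_of_not_gt fun hRr₀ => (hlt R hR hRr₀).ne' hvu, hvu⟩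
  · rintro ⟨hR, hvu⟩
    exact ⟨hr₀.trans_le hR, hvu⟩

lemma sInf_crossingSet_mem (hu : ContinuousOn u (Ioi 0)) (hv : ContinuousOn v (Ioi 0))
    (hr₀ : 0 < r₀) (hlt : ∀ r, 0 < r → r < r₀ → u r < v r) (hne : (crossingSet u v).Nonempty) :
    sInf (crossingSet u v) ∈ crossingSet u v := by
  have hsub : Ici r₀ ⊆ Ioi 0 := Ici_subset_Ioi.2 hr₀
  have hclosed : IsClosed (crossingSet u v) := by
    rw [crossingSet_eq hr₀ hlt]
    exact isClosed_Ici.isClosed_eq (hv.mono hsub) (hu.mono hsub)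
  exact hclosed.csInf_mem hne ⟨0, fun R hR => hR.1.le⟩

lemma lt_of_lt_sInf_crossingSet (hu : ContinuousOn u (Ioi 0)) (hv : ContinuousOn v (Ioi 0))
    (hr₀ : 0 < r₀) (hlt : ∀ r, 0 < r → r < r₀ → u r < v r) {r : ℝ} (hr : 0 < r)
    (hrZ : r < sInf (crossingSet u v)) : u r < v r := by
  by_contra! hvu
  set Z := sInf (crossingSet u v)
  have hZ : 0 < Z := hr.trans hrZ
  obtain ⟨t, ht₀, htr₀, htZ⟩ : ∃ t, 0 < t ∧ t < r₀ ∧ t < Z := by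
    obtain ⟨t, ht₀, ht⟩ := exists_between (lt_min hr₀ hZ)
    exact ⟨t, ht₀, lt_min_iff.1 ht⟩
  obtain ⟨c, hc, hc0⟩ : ∃ c ∈ Ioo 0 Z, v c - u c = 0 :=
    isPreconnected_Ioo.intermediate_value ⟨hr, hrZ⟩ ⟨ht₀, htZ⟩
      ((hv.sub hu).mono fun x hx => hx.1)
      ⟨sub_nonpos.2 hvu, sub_nonneg.2 (hlt t ht₀ htr₀).le⟩
  have : Z ≤ c := csInf_le ⟨0, fun R hR => hR.1.le⟩ ⟨hc.1, sub_eq_zero.1 hc0⟩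
  exact absurd hc.2 this.not_gt

end FirstCrossing

theorem first_crossing_point_transversal_general
    (n : ℕ) (f : ℝ → ℝ → ℝ)
    (hflip : ∀ p : ℝ × ℝ, 0 ≤ p.1 → 0 < p.2 → ∃ K ε : ℝ, 0 < ε ∧
      ∀ a b : ℝ × ℝ, 0 ≤ a.1 → 0 < a.2 → 0 ≤ b.1 → 0 < b.2 →
        dist a p < ε → dist b p < ε → |f a.1 a.2 - f b.1 b.2| ≤ K * dist a b)
    (U₁ U₁' U₂ U₂' : ℝ → ℝ)
    (h1pos : ∀ r : ℝ, 0 < r → 0 < U₁ r) (h2pos : ∀ r : ℝ, 0 < r → 0 < U₂ r)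
    (h1 : Paper.SolOn n f U₁ U₁' (Set.Ioi 0))
    (h2 : Paper.SolOn n f U₂ U₂' (Set.Ioi 0))
    (hsmall : ∃ r₀ : ℝ, 0 < r₀ ∧ ∀ r : ℝ, 0 < r → r < r₀ → U₁ r < U₂ r)
    (hne : {R : ℝ | 0 < R ∧ U₂ R = U₁ R}.Nonempty) :
    ∀ Z : ℝ, Z = sInf {R : ℝ | 0 < R ∧ U₂ R = U₁ R} →
      0 < Z ∧ (∀ r : ℝ, 0 < r → r < Z → U₁ r < U₂ r) ∧
        U₂ Z = U₁ Z ∧ U₂' Z < U₁' Z := by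
  intro Z hZ
  obtain ⟨r₀, hr₀, hlt₀⟩ := hsmall
  have hc₁ : ContinuousOn U₁ (Ioi 0) := fun r hr => (h1 r hr).1.continuousAt.continuousWithinAt
  have hc₂ : ContinuousOn U₂ (Ioi 0) := fun r hr => (h2 r hr).1.continuousAt.continuousWithinAt
  obtain ⟨hZpos, hZeq⟩ : Z ∈ crossingSet U₁ U₂ := by
    rw [hZ]; exact sInf_crossingSet_mem hc₁ hc₂ hr₀ hlt₀ hne
  have hlt : ∀ r : ℝ, 0 < r → r < Z → U₁ r < U₂ r := fun r hr hrZ =>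
    lt_of_lt_sInf_crossingSet hc₁ hc₂ hr₀ hlt₀ hr (hZ ▸ hrZ)
  have hleft : ∀ᶠ r in 𝓝[<] Z, U₁ r < U₂ r := by
    filter_upwards [Ioo_mem_nhdsLT hZpos] with r hr using hlt r hr.1 hr.2
  refine ⟨hZpos, hlt, hZeq, lt_of_le_of_ne ?_ fun hderiv => ?_⟩
  · have := ((h2 Z hZpos).1.sub (h1 Z hZpos).1).nonpos_of_eventually_nonneg_left
      (sub_eq_zero.2 hZeq) (hleft.mono fun r hr => sub_nonneg.2 hr.le)
    linarith
  · have hnn : ∀ U : ℝ → ℝ, (∀ r, 0 < r → 0 < U r) → ∀ᶠ r in 𝓝 Z, 0 ≤ U r := fun U hU =>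
      (eventually_gt_nhds hZpos).mono fun r hr => (hU r hr).le
    have heq : U₁ =ᶠ[𝓝 Z] U₂ := h1.eventuallyEq_of_eq_of_deriv_eq
      (locallyLipschitzOn_uncurry_of_local_bound hflip) h2 hZpos (hnn U₁ h1pos) (hnn U₂ h2pos)
      hZeq.symm hderiv.symm
    obtain ⟨r, hr, hr'⟩ := (hleft.and (heq.filter_mono nhdsWithin_le_nhds)).exists
    exact hr.ne hr'

/-- at the first crossing point `Z` of two ordered positive solutions of the
radial stationary equation, the solutions cross transversally: `U₂'(Z) < U₁'(Z)`. -/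
theorem first_crossing_point_transversal
    (n : ℕ) (hn : 2 < n) (f : ℝ → ℝ → ℝ)
    (hflip : ∀ p : ℝ × ℝ, 0 ≤ p.1 → 0 < p.2 → ∃ K ε : ℝ, 0 < ε ∧
      ∀ a b : ℝ × ℝ, 0 ≤ a.1 → 0 < a.2 → 0 ≤ b.1 → 0 < b.2 →
        dist a p < ε → dist b p < ε → |f a.1 a.2 - f b.1 b.2| ≤ K * dist a b)
    (hfnn : ∀ u r : ℝ, 0 ≤ u → 0 < r → 0 ≤ f u r)
    (U₁ U₁' U₂ U₂' : ℝ → ℝ)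
    (h1pos : ∀ r : ℝ, 0 < r → 0 < U₁ r) (h2pos : ∀ r : ℝ, 0 < r → 0 < U₂ r)
    (h1 : Paper.SolOn n f U₁ U₁' (Set.Ioi 0))
    (h2 : Paper.SolOn n f U₂ U₂' (Set.Ioi 0))
    (hsmall : ∃ r₀ : ℝ, 0 < r₀ ∧ ∀ r : ℝ, 0 < r → r < r₀ → U₁ r < U₂ r)
    (hne : {R : ℝ | 0 < R ∧ U₂ R = U₁ R}.Nonempty) :
    ∀ Z : ℝ, Z = sInf {R : ℝ | 0 < R ∧ U₂ R = U₁ R} →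
      0 < Z ∧ (∀ r : ℝ, 0 < r → r < Z → U₁ r < U₂ r) ∧
        U₂ Z = U₁ Z ∧ U₂' Z < U₁' Z :=
  first_crossing_point_transversal_general n f hflip U₁ U₁' U₂ U₂' h1pos h2pos h1 h2 hsmall hne
end
end
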